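/- Let G be a strongly connected signed digraph on a finite vertex set V with |V| = n, without positive cycles, whose underlying digraph is not a cycle. If there is a set of at most one vertex meeting every cycle of G (i.e., the minimum size of a feedback vertex set of G is at most 1), then there is a single word w of length at most 3n − 1 which synchronizes every and-or-net on G. -/

import Mathlib

/-- A signed digraph on vertex set `V`, given by its positive and negative arc relations. -/
structure SignedDigraph (V : Type*) where
  pos : V → V → Prop
  neg : V → V → Prop

/-- The last vertex of a walk starting at `u` with the given steps. -/
def walkEnd {V : Type*} (u : V) (steps : List (V × Bool)) : V :=
  (steps.map Prod.fst).getLastD u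

/-- The sign of a walk (`true` = positive): positive iff the number of
negative (`false`) arcs is even. -/
def walkSign {V : Type*} (steps : List (V × Bool)) : Bool :=
  steps.foldl (fun acc step => acc == step.2) true

namespace SignedDigraph

variable {V : Type*}

/-- Arc of the underlying digraph. -/
def Arc (G : SignedDigraph V) (j i : V) : Prop := G.pos j i ∨ G.neg j i

/-- `G.IsWalk u steps`: `steps` is a list of (next vertex, sign of arc) pairs
describing a walk in `G` starting at `u`. -/
def IsWalk (G : SignedDigraph V) : V → List (V × Bool) → Prop
  | _, [] => True
  | u, step :: rest =>
      (if step.2 then G.pos u step.1 else G.neg u step.1) ∧ G.IsWalk step.1 rest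

/-- A (simple) path from `u`: a walk with pairwise distinct vertices. -/
def IsPath (G : SignedDigraph V) (u : V) (steps : List (V × Bool)) : Prop :=
  G.IsWalk u steps ∧ (u :: steps.map Prod.fst).Nodup

/-- A (simple) path from `u` to `v`. -/
def IsPathFrom (G : SignedDigraph V) (u : V) (steps : List (V × Bool)) (v : V) : Prop :=
  G.IsPath u steps ∧ walkEnd u steps = v

/-- A cycle through `u`: a nonempty closed walk from `u` back to `u` with no repeated
vertex except the endpoint. -/
def IsCycle (G : SignedDigraph V) (u : V) (steps : List (V × Bool)) : Prop :=
  steps ≠ [] ∧ G.IsWalk u steps ∧ walkEnd u steps = u ∧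
    (u :: (steps.map Prod.fst).dropLast).Nodup

/-- `G` has no positive cycle. -/
def NoPositiveCycle (G : SignedDigraph V) : Prop :=
  ∀ u steps, G.IsCycle u steps → walkSign steps = false

/-- `G` has no negative cycle. -/
def NoNegativeCycle (G : SignedDigraph V) : Prop :=
  ∀ u steps, G.IsCycle u steps → walkSign steps = true

/-- Reachability in the underlying digraph. -/
def Reach (G : SignedDigraph V) (u v : V) : Prop :=
  ∃ steps, G.IsWalk u steps ∧ walkEnd u steps = v

/-- The underlying digraph of `G` is strongly connected. -/
def StronglyConnected (G : SignedDigraph V) : Prop := ∀ u v, G.Reach u v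

/-- `u` and `v` lie in the same strong component. -/
def SameComp (G : SignedDigraph V) (u v : V) : Prop := G.Reach u v ∧ G.Reach v u

/-- The strong component of `u`. -/
def comp (G : SignedDigraph V) (u : V) : Set V := {v | G.SameComp u v}

/-- The in-degree of `i`: the number of arcs (with their signs) entering `i`. -/
noncomputable def inDegree (G : SignedDigraph V) (i : V) : ℕ :=
  {j | G.pos j i}.ncard + {j | G.neg j i}.ncard

/-- A source: a vertex with no in-coming arc. -/
def IsSource (G : SignedDigraph V) (i : V) : Prop := ∀ j, ¬ G.Arc j i

/-- `G` has no sources. -/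
def NoSource (G : SignedDigraph V) : Prop := ∀ i, ¬ G.IsSource i

/-- The subgraph induced on a set `S` of vertices. -/
def induce (G : SignedDigraph V) (S : Set V) : SignedDigraph V where
  pos j i := j ∈ S ∧ i ∈ S ∧ G.pos j i
  neg j i := j ∈ S ∧ i ∈ S ∧ G.neg j i

/-- The underlying digraph of `G` restricted to `S` is a cycle: `S` is nonempty,
every vertex of `S` has exactly one in-coming arc inside `S`, and `S` is strongly
connected inside `S`. -/
def IsCycleGraphOn (G : SignedDigraph V) (S : Set V) : Prop :=
  S.Nonempty ∧ (∀ i ∈ S, (G.induce S).inDegree i = 1) ∧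
    ∀ u ∈ S, ∀ v ∈ S, (G.induce S).Reach u v

/-- The underlying digraph of `G` is a cycle. -/
def IsCycleGraph (G : SignedDigraph V) : Prop := G.IsCycleGraphOn Set.univ

/-- `S` is an initial strong component of `G`. -/
def IsInitialComponent (G : SignedDigraph V) (S : Set V) : Prop :=
  (∃ u, S = G.comp u) ∧ ∀ j i, i ∈ S → G.Arc j i → j ∈ S

/-- `G` has an initial cycle: an initial strong component whose underlying digraph
is a cycle. -/
def HasInitialCycle (G : SignedDigraph V) : Prop :=
  ∃ S : Set V, G.IsInitialComponent S ∧ G.IsCycleGraphOn S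

/-- A forward path: a nonempty path whose last arc joins two distinct strong
components. -/
def IsForwardPath (G : SignedDigraph V) (u : V) (steps : List (V × Bool)) (v : V) : Prop :=
  G.IsPathFrom u steps v ∧ steps ≠ [] ∧ ¬ G.SameComp (walkEnd u steps.dropLast) v

/-- `G` is `i`-homogenous: every strong component contains a vertex `j` such that
all forward paths from `j` to `i` have the same sign. -/
def IsHomogenousAt (G : SignedDigraph V) (i : V) : Prop :=
  ∀ u : V, ∃ j, G.SameComp u j ∧
    ∀ steps₁ steps₂, G.IsForwardPath j steps₁ i → G.IsForwardPath j steps₂ i →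
      walkSign steps₁ = walkSign steps₂

/-- `G` is homogenous. -/
def IsHomogenous (G : SignedDigraph V) : Prop := ∀ i, G.IsHomogenousAt i

/-- `G` is simple: no pair of parallel arcs of opposite signs. -/
def IsSimple (G : SignedDigraph V) : Prop := ∀ j i, ¬ (G.pos j i ∧ G.neg j i)

end SignedDigraph

section BooleanNetwork

variable {V : Type*} [DecidableEq V]

/-- Asynchronous update of component `i` of the Boolean network `f`. -/
def localUpdate (f : (V → Bool) → V → Bool) (i : V) (x : V → Bool) : V → Bool :=
  Function.update x i (f x i)

/-- `f^w` : for `w = i₁,…,i_ℓ`, `wordUpdate f w = f^{i_ℓ} ∘ ⋯ ∘ f^{i₁}`. -/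
def wordUpdate (f : (V → Bool) → V → Bool) (w : List V) (x : V → Bool) : V → Bool :=
  w.foldl (fun y i => localUpdate f i y) x

/-- `w` is a synchronizing word for `f`: `f^w` is constant. -/
def SyncWord (f : (V → Bool) → V → Bool) (w : List V) : Prop :=
  ∃ c : V → Bool, ∀ x, wordUpdate f w x = c

/-- `f` is synchronizing. -/
def Synchronizing (f : (V → Bool) → V → Bool) : Prop := ∃ w, SyncWord f w

/-- Positive arc of the signed interaction digraph of `f`. -/
def posIArc (f : (V → Bool) → V → Bool) (j i : V) : Prop :=
  ∃ x : V → Bool, x j = false ∧ f x i = false ∧ f (Function.update x j true) i = true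

/-- Negative arc of the signed interaction digraph of `f`. -/
def negIArc (f : (V → Bool) → V → Bool) (j i : V) : Prop :=
  ∃ x : V → Bool, x j = false ∧ f x i = true ∧ f (Function.update x j true) i = false

/-- `f` is a Boolean network on `G`: the signed interaction digraph of `f` is `G`. -/
def IsBNOn (f : (V → Bool) → V → Bool) (G : SignedDigraph V) : Prop :=
  (∀ j i, G.pos j i ↔ posIArc f j i) ∧ (∀ j i, G.neg j i ↔ negIArc f j i)

/-- Component `i` of `f` is a conjunction with respect to `G`. -/
def IsConjunction (G : SignedDigraph V) (f : (V → Bool) → V → Bool) (i : V) : Prop :=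
  ∀ x : V → Bool, (f x i = true ↔
    (∀ j, G.pos j i → x j = true) ∧ (∀ j, G.neg j i → x j = false))

/-- Component `i` of `f` is a disjunction with respect to `G`. -/
def IsDisjunction (G : SignedDigraph V) (f : (V → Bool) → V → Bool) (i : V) : Prop :=
  ∀ x : V → Bool, (f x i = false ↔
    (∀ j, G.pos j i → x j = false) ∧ (∀ j, G.neg j i → x j = true))

/-- `f` is an and-or-net on `G`. -/
def IsAndOrNet (G : SignedDigraph V) (f : (V → Bool) → V → Bool) : Prop :=
  IsBNOn f G ∧ ∀ i, IsConjunction G f i ∨ IsDisjunction G f i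

/-- `f` is the and-net on `G`. -/
def IsAndNet (G : SignedDigraph V) (f : (V → Bool) → V → Bool) : Prop :=
  IsBNOn f G ∧ ∀ i, IsConjunction G f i

/-- `w` is a canalizing word from `(i, a)` with image `b`. -/
def Canalizing (f : (V → Bool) → V → Bool) (i : V) (a : Bool) (w : List V)
    (b : V → Bool) : Prop :=
  i ∉ w ∧ w.Nodup ∧ ∀ x : V → Bool, x i = a → ∀ j ∈ w, wordUpdate f w x j = b j

end BooleanNetwork

/-!
Let `v` be a vertex meeting every cycle, so that `G - v` is acyclic. As `G` has no positive cycle,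
every closed walk meeting `v` only at its ends is negative, so all walks from `v` avoiding `v`
afterwards have the same sign at a given end: this gives a switching `σ` after which every arc is
positive except the arcs entering `v`, which are negative. For an and-or-net `f` on `G`, updating
the vertices of `G - v` in a topological order `L₀` therefore spreads the state of `v` (read through
`σ`) over the whole network, and then updating `v` negates it.

Since `G` is not a cycle, going back from `v` through vertices with a single in-neighbour reaches a
vertex `c` with two in-neighbours `k₁, k₂`, and they can be chosen with `k₂` not an ancestor of `k₁`
in `G - v`. Let `L₁` list the ancestors of `k₁` in `G - v` and let `ch` be the path from `c` to `v`.
After `L₀ v L₁` the states of `k₁` and `k₂` disagree (through `σ`), so `c` updates to the same value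
for every initial configuration; `ch` carries that value to `v` and a final `L₀` spreads it. The
word `L₀ v L₁ c ch L₀` has length at most `3n - 1` because `L₁` and `c :: ch` are disjoint.
-/

namespace List

variable {α : Type*}

theorem exists_cons_append_singleton_isInfix_of_not_nodup {l : List α} (h : ¬ l.Nodup) :
    ∃ b B, b :: B ++ [b] <:+: l := by
  induction l with
  | nil => simp at h
  | cons a t ih =>
    by_cases ha : a ∈ t
    · obtain ⟨s, r, rfl⟩ := append_of_mem ha
      exact ⟨a, s, (prefix_append (a :: s ++ [a]) r).isInfix.trans (by simp)⟩
    · obtain ⟨b, B, hB⟩ := ih (by simp_all)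
      exact ⟨b, B, infix_cons hB⟩

theorem IsChain.exists_rel_of_mem {R : α → α → Prop} {a b : α} {l : List α}
    (h : (a :: l).IsChain R) (hb : b ∈ l) : ∃ p ∈ a :: l, R p b := by
  induction l generalizing a with
  | nil => simp at hb
  | cons c t ih =>
    rw [isChain_cons_cons] at h
    rcases mem_cons.1 hb with rfl | hb
    · exact ⟨a, mem_cons_self, h.1⟩
    · obtain ⟨p, hp, hpb⟩ := ih h.2 hb
      exact ⟨p, mem_cons_of_mem a hp, hpb⟩

end List

theorem WellFounded.exists_perm_pairwise_not_rel {α : Type*} {r : α → α → Prop}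
    (hr : WellFounded r) (l : List α) :
    ∃ L : List α, L.Perm l ∧ L.Pairwise (fun a b => ¬ r b a) := by
  have : IsWellFounded α r := ⟨hr⟩
  refine ⟨l.mergeSort (fun a b => decide (IsWellFounded.rank r a ≤ IsWellFounded.rank r b)),
    List.mergeSort_perm _ _, ?_⟩
  refine (List.pairwise_mergeSort (fun a b c => by simpa using le_trans)
    (fun a b => by simpa using le_total _ _) l).imp fun hab hba => ?_
  exact (IsWellFounded.rank_lt_of_rel hba).not_ge (by simpa using hab)

namespace SignedDigraph

variable {V : Type*} {G : SignedDigraph V} {u v x : V} {steps : List (V × Bool)}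

def SignedArc (G : SignedDigraph V) (s : Bool) (j i : V) : Prop :=
  if s then G.pos j i else G.neg j i

theorem arc_iff_exists_signedArc {j i : V} : G.Arc j i ↔ ∃ s, G.SignedArc s j i := by
  simp [Arc, SignedArc, or_comm]

theorem SignedArc.arc {s : Bool} {j i : V} (h : G.SignedArc s j i) : G.Arc j i :=
  arc_iff_exists_signedArc.2 ⟨s, h⟩

@[simp]
theorem isWalk_nil : G.IsWalk u [] := trivial

@[simp]
theorem isWalk_cons {st : V × Bool} {rest : List (V × Bool)} :
    G.IsWalk u (st :: rest) ↔ G.SignedArc st.2 u st.1 ∧ G.IsWalk st.1 rest :=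
  Iff.rfl

@[simp]
theorem walkEnd_nil : walkEnd u ([] : List (V × Bool)) = u := rfl

@[simp]
theorem walkEnd_cons {st : V × Bool} {rest : List (V × Bool)} :
    walkEnd u (st :: rest) = walkEnd st.1 rest := by
  simp only [walkEnd, List.map_cons, List.getLastD_cons]

theorem walkEnd_append {a b : List (V × Bool)} :
    walkEnd u (a ++ b) = walkEnd (walkEnd u a) b := by
  induction a generalizing u <;> simp_all

@[simp]
theorem walkEnd_concat {a : List (V × Bool)} {st : V × Bool} :
    walkEnd u (a ++ [st]) = st.1 := by
  simp [walkEnd_append]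

theorem isWalk_append {a b : List (V × Bool)} :
    G.IsWalk u (a ++ b) ↔ G.IsWalk u a ∧ G.IsWalk (walkEnd u a) b := by
  induction a generalizing u <;> simp_all [and_assoc]

theorem walkEnd_mem (h : steps ≠ []) : walkEnd u steps ∈ steps.map Prod.fst := by
  induction steps generalizing u with
  | nil => contradiction
  | cons st rest ih =>
    cases rest with
    | nil => simp
    | cons st' rest' => exact List.mem_cons_of_mem _ (by simpa using ih (u := st.1) (by simp))

theorem map_fst_eq_dropLast_append_walkEnd (h : steps ≠ []) :
    steps.map Prod.fst = (steps.map Prod.fst).dropLast ++ [walkEnd u steps] := by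
  have h' : steps.map Prod.fst ≠ [] := by simpa using h
  rw [walkEnd, List.getLastD_eq_getLast?, List.getLast?_eq_some_getLast h', Option.getD_some]
  exact (List.dropLast_append_getLast h').symm

theorem walkSign_append {a b : List (V × Bool)} :
    walkSign (a ++ b) = (walkSign a == walkSign b) := by
  have shift (c : Bool) (l : List (V × Bool)) :
      l.foldl (fun acc step => acc == step.2) c = (c == walkSign l) := by
    induction l generalizing c with
    | nil => simp [walkSign]
    | cons st rest ih =>
      simp only [walkSign, List.foldl_cons] at *
      rw [ih, ih (true == st.2)]
      cases c <;> cases st.2 <;> simp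
  simp only [walkSign, List.foldl_append]
  exact shift _ b

@[simp]
theorem walkSign_singleton (st : V × Bool) : walkSign [st] = st.2 := by
  simp [walkSign]

theorem IsWalk.isChain (h : G.IsWalk u steps) : (u :: steps.map Prod.fst).IsChain G.Arc := by
  induction steps generalizing u with
  | nil => simp
  | cons st rest ih => exact .cons_cons (SignedArc.arc h.1) (ih h.2)

theorem exists_isWalk_of_isChain {l : List V} (h : (u :: l).IsChain G.Arc) :
    ∃ steps, G.IsWalk u steps ∧ steps.map Prod.fst = l := by
  induction l generalizing u with
  | nil => exact ⟨[], trivial, rfl⟩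
  | cons a t ih =>
    rw [List.isChain_cons_cons] at h
    obtain ⟨s, hs⟩ := arc_iff_exists_signedArc.1 h.1
    obtain ⟨steps, hw, hl⟩ := ih h.2
    exact ⟨(a, s) :: steps, ⟨hs, hw⟩, by simp [hl]⟩

/-- Shortcut a repeated vertex until none is left. -/
theorem exists_isCycle_of_isChain {a : V} {l : List V} (h : (a :: l ++ [a]).IsChain G.Arc) :
    ∃ u steps, G.IsCycle u steps ∧ u :: steps.map Prod.fst ⊆ a :: l := by
  induction hn : l.length using Nat.strong_induction_on generalizing a l with
  | _ n ih =>
  by_cases hnd : (a :: l).Nodup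
  · obtain ⟨steps, hw, hl⟩ := exists_isWalk_of_isChain h
    refine ⟨a, steps, ⟨?_, hw, ?_, ?_⟩, ?_⟩
    · rintro rfl; simp at hl
    · simp [walkEnd, hl]
    · simpa [hl] using hnd
    · simp [hl]
  · obtain ⟨b, B, hB⟩ := List.exists_cons_append_singleton_isInfix_of_not_nodup hnd
    have hBl : B.length < n := by have := hB.length_le; simp at this; omega
    obtain ⟨u, steps, hcyc, hsub⟩ :=
      ih _ hBl (h.infix (hB.trans (List.prefix_append _ [a]).isInfix)) rfl
    exact ⟨u, steps, hcyc, List.Subset.trans hsub (List.Subset.trans (by simp) hB.subset)⟩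

def SoleArc (G : SignedDigraph V) (p i : V) : Prop := ∀ k, G.Arc k i ↔ k = p

theorem SoleArc.arc {p i : V} (h : G.SoleArc p i) : G.Arc p i := (h p).2 rfl

theorem mem_of_reach_of_forall_arc_mem {S : Set V} (hS : ∀ k i, i ∈ S → G.Arc k i → k ∈ S)
    {u w : V} (h : G.Reach u w) (hw : w ∈ S) : u ∈ S := by
  obtain ⟨steps, hwalk, rfl⟩ := h
  induction steps generalizing u with
  | nil => exact hw
  | cons st rest ih => exact hS u st.1 (ih hwalk.2 (by simpa using hw)) (SignedArc.arc hwalk.1)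

theorem exists_arc_of_stronglyConnected [Nontrivial V] (hstrong : G.StronglyConnected) (i : V) :
    ∃ j, G.Arc j i := by
  obtain ⟨u, hu⟩ := exists_ne i
  obtain ⟨steps, hwalk, hend⟩ := hstrong u i
  rcases List.eq_nil_or_concat steps with rfl | ⟨L, st, rfl⟩
  · exact absurd hend hu
  · rw [List.concat_eq_append, isWalk_append] at hwalk
    rw [List.concat_eq_append] at hend
    exact ⟨walkEnd u L, by simpa [← hend] using SignedArc.arc hwalk.2.1⟩

theorem induce_univ : G.induce Set.univ = G := by
  cases G
  simp [induce]

theorem inDegree_eq_one {p i : V} (hsimple : G.IsSimple) (hp : G.SoleArc p i) :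
    G.inDegree i = 1 := by
  have hpos : ∀ k, G.pos k i → k = p := fun k hk => (hp k).1 (Or.inl hk)
  have hneg : ∀ k, G.neg k i → k = p := fun k hk => (hp k).1 (Or.inr hk)
  rcases hp.arc with h | h
  · have h₁ : {j | G.pos j i} = {p} := Set.ext fun k => ⟨hpos k, fun hk => hk ▸ h⟩
    have h₂ : {j | G.neg j i} = ∅ :=
      Set.eq_empty_of_forall_notMem fun k hk => hsimple p i ⟨h, hneg k hk ▸ hk⟩
    simp [inDegree, h₁, h₂]
  · have h₁ : {j | G.pos j i} = ∅ :=
      Set.eq_empty_of_forall_notMem fun k hk => hsimple p i ⟨hpos k hk ▸ hk, h⟩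
    have h₂ : {j | G.neg j i} = {p} := Set.ext fun k => ⟨hneg k, fun hk => hk ▸ h⟩
    simp [inDegree, h₁, h₂]

theorem isCycleGraph_of_forall_exists_soleArc [Nonempty V] (hstrong : G.StronglyConnected)
    (hsimple : G.IsSimple) (h : ∀ i, ∃ p, G.SoleArc p i) : G.IsCycleGraph := by
  refine ⟨Set.univ_nonempty, fun i _ => ?_, fun u _ w _ => ?_⟩
  · obtain ⟨p, hp⟩ := h i
    rw [induce_univ]
    exact inDegree_eq_one hsimple hp
  · rw [induce_univ]
    exact hstrong u w

def IsFeedbackVertex (G : SignedDigraph V) (v : V) : Prop :=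
  ∀ u steps, G.IsCycle u steps → v ∈ u :: steps.map Prod.fst

theorem exists_isFeedbackVertex [Nonempty V] (h : ∃ S : Finset V, S.card ≤ 1 ∧
    ∀ u steps, G.IsCycle u steps → ∃ v ∈ S, v ∈ u :: steps.map Prod.fst) :
    ∃ v, G.IsFeedbackVertex v := by
  obtain ⟨S, hS, hcyc⟩ := h
  obtain ⟨v, hSv⟩ := Finset.card_le_one_iff_subset_singleton.1 hS
  refine ⟨v, fun u steps hc => ?_⟩
  obtain ⟨w, hw, hmem⟩ := hcyc u steps hc
  rwa [Finset.mem_singleton.1 (hSv hw)] at hmem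

/-- The arcs of `G - v`. -/
def ArcAvoiding (G : SignedDigraph V) (v j i : V) : Prop := j ≠ v ∧ i ≠ v ∧ G.Arc j i

theorem exists_isWalk_not_mem_of_reach (h : G.Reach v x) :
    ∃ steps, G.IsWalk v steps ∧ walkEnd v steps = x ∧ v ∉ steps.map Prod.fst := by
  obtain ⟨steps, hwalk, rfl⟩ := h
  induction steps using List.reverseRecOn with
  | nil => exact ⟨[], trivial, rfl, by simp⟩
  | append_singleton L st ih =>
    rw [isWalk_append] at hwalk
    obtain ⟨P, hP, hPend, hPv⟩ := ih hwalk.1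
    by_cases hst : st.1 = v
    · exact ⟨[], trivial, by simp [hst], by simp⟩
    · refine ⟨P ++ [st], ?_, by simp, by simp [hPv, Ne.symm hst]⟩
      rw [isWalk_append, hPend]
      exact ⟨hP, hwalk.2⟩

theorem exists_isWalk_not_mem_dropLast_of_reach (h : G.Reach u v) :
    ∃ steps, G.IsWalk u steps ∧ walkEnd u steps = v ∧ v ∉ (steps.map Prod.fst).dropLast := by
  obtain ⟨steps, hwalk, rfl⟩ := h
  induction steps generalizing u with
  | nil => exact ⟨[], trivial, rfl, by simp⟩
  | cons st rest ih =>
    by_cases hst : st.1 = walkEnd u (st :: rest)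
    · exact ⟨[st], ⟨hwalk.1, trivial⟩, hst, by simp⟩
    · obtain ⟨R, hR, hRend, hRv⟩ := ih hwalk.2
      refine ⟨st :: R, ⟨hwalk.1, hR⟩, by simpa using hRend, ?_⟩
      cases R with
      | nil => simp
      | cons r R =>
        simp only [walkEnd_cons] at hst
        simpa [Ne.symm hst] using hRv

namespace IsFeedbackVertex

theorem not_isChain (hv : G.IsFeedbackVertex v) {a : V} {l : List V}
    (h : (a :: l ++ [a]).IsChain G.Arc) (hvl : v ∉ a :: l) : False :=
  let ⟨u, steps, hcyc, hsub⟩ := exists_isCycle_of_isChain h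
  hvl (hsub (hv u steps hcyc))

theorem not_transGen_arcAvoiding (hv : G.IsFeedbackVertex v) (a : V) :
    ¬ Relation.TransGen (G.ArcAvoiding v) a a := by
  intro h
  obtain ⟨b, hab, hba⟩ := Relation.TransGen.head'_iff.1 h
  obtain ⟨l, hl, hlast⟩ := List.exists_isChain_cons_of_relationReflTransGen hba
  have hchain : (a :: (b :: l).dropLast ++ [a]).IsChain (G.ArcAvoiding v) := by
    have hbl : (b :: l).dropLast ++ [a] = b :: l := by
      rw [← hlast]
      exact List.dropLast_append_getLast _
    rw [List.cons_append, hbl]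
    exact .cons_cons hab hl
  refine hv.not_isChain (hchain.imp fun _ _ h => h.2.2) fun hva => ?_
  rcases List.mem_cons.1 hva with rfl | hvl
  · exact hab.1 rfl
  · obtain ⟨p, -, hp⟩ := hchain.exists_rel_of_mem (List.mem_append_left _ hvl)
    exact hp.2.1 rfl

theorem wellFounded_arcAvoiding [Finite V] (hv : G.IsFeedbackVertex v) :
    WellFounded (G.ArcAvoiding v) :=
  have : IsTrans V (Relation.TransGen (G.ArcAvoiding v)) := ⟨fun _ _ _ => .trans⟩
  have : Std.Irrefl (Relation.TransGen (G.ArcAvoiding v)) := ⟨hv.not_transGen_arcAvoiding⟩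
  Subrelation.wf (fun h => Relation.TransGen.single h) (Finite.wellFounded_of_trans_of_irrefl _)

theorem walkSign_eq_false (hv : G.IsFeedbackVertex v) (hpos : G.NoPositiveCycle)
    (hne : steps ≠ []) (hw : G.IsWalk v steps) (hend : walkEnd v steps = v)
    (hint : v ∉ (steps.map Prod.fst).dropLast) : walkSign steps = false := by
  by_cases hnd : (v :: (steps.map Prod.fst).dropLast).Nodup
  · exact hpos v steps ⟨hne, hw, hend, hnd⟩
  exfalso
  obtain ⟨b, B, hB⟩ := List.exists_cons_append_singleton_isInfix_of_not_nodup
    fun h => hnd (List.nodup_cons.2 ⟨hint, h⟩)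
  have hchain := hw.isChain
  rw [map_fst_eq_dropLast_append_walkEnd hne, hend] at hchain
  exact hv.not_isChain (hchain.infix (hB.trans (List.infix_cons (List.prefix_append _ _).isInfix)))
    fun hvB => hint (hB.subset (List.mem_append_left _ hvB))

theorem walkSign_eq_of_not_mem (hv : G.IsFeedbackVertex v) (hpos : G.NoPositiveCycle)
    (hstrong : G.StronglyConnected) (hx : x ≠ v) {P Q : List (V × Bool)}
    (hP : G.IsWalk v P) (hPend : walkEnd v P = x) (hPv : v ∉ P.map Prod.fst)
    (hQ : G.IsWalk v Q) (hQend : walkEnd v Q = x) (hQv : v ∉ Q.map Prod.fst) :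
    walkSign P = walkSign Q := by
  obtain ⟨R, hR, hRend, hRv⟩ := exists_isWalk_not_mem_dropLast_of_reach (hstrong x v)
  have hRne : R ≠ [] := by rintro rfl; exact hx hRend
  have closed (S : List (V × Bool)) (hS : G.IsWalk v S) (hSend : walkEnd v S = x)
      (hSv : v ∉ S.map Prod.fst) : (walkSign S == walkSign R) = false := by
    rw [← walkSign_append]
    refine hv.walkSign_eq_false hpos (by simp [hRne]) ?_ ?_ ?_
    · rw [isWalk_append, hSend]; exact ⟨hS, hR⟩
    · rw [walkEnd_append, hSend, hRend]
    · rw [List.map_append, List.dropLast_append_of_ne_nil (by simpa using hRne)]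
      simp [hSv, hRv]
  have h₁ := closed P hP hPend hPv
  have h₂ := closed Q hQ hQend hQv
  revert h₁ h₂
  cases walkSign P <;> cases walkSign Q <;> cases walkSign R <;> simp

end IsFeedbackVertex

/-- Reading `σ j = false` as switching the sign of vertex `j`, every arc of the switched graph
is positive, except the arcs entering `v`, which are all negative. -/
structure IsSwitchingAt (G : SignedDigraph V) (v : V) (σ : V → Bool) : Prop where
  apply_self : σ v = true
  consistent {s : Bool} {j i : V} : G.SignedArc s j i → i ≠ v → σ i = (σ j == s)
  frustrated {s : Bool} {j : V} : G.SignedArc s j v → (σ j == s) = false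

namespace IsSwitchingAt

variable {σ : V → Bool}

theorem beq_eq_beq (hσ : G.IsSwitchingAt v σ) {s₁ s₂ : Bool} {j₁ j₂ i : V}
    (h₁ : G.SignedArc s₁ j₁ i) (h₂ : G.SignedArc s₂ j₂ i) : (σ j₁ == s₁) = (σ j₂ == s₂) := by
  by_cases hi : i = v
  · subst hi
    rw [hσ.frustrated h₁, hσ.frustrated h₂]
  · rw [← hσ.consistent h₁ hi, ← hσ.consistent h₂ hi]

theorem isSimple (hσ : G.IsSwitchingAt v σ) : G.IsSimple := by
  rintro j i ⟨hp, hn⟩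
  have := hσ.beq_eq_beq (s₁ := true) (s₂ := false) (j₁ := j) (j₂ := j) (by simpa [SignedArc])
    (by simpa [SignedArc])
  cases σ j <;> simp at this

end IsSwitchingAt

theorem IsFeedbackVertex.exists_isSwitchingAt (hv : G.IsFeedbackVertex v)
    (hpos : G.NoPositiveCycle) (hstrong : G.StronglyConnected) : ∃ σ, G.IsSwitchingAt v σ := by
  choose P hP hPend hPv using fun x => exists_isWalk_not_mem_of_reach (hstrong v x)
  have hPv_nil : P v = [] := by
    by_contra hne
    exact hPv v (by simpa [hPend] using walkEnd_mem (u := v) hne)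
  have extend {s : Bool} {j i : V} (h : G.SignedArc s j i) :
      G.IsWalk v (P j ++ [(i, s)]) ∧ walkSign (P j ++ [(i, s)]) = (walkSign (P j) == s) := by
    rw [isWalk_append, hPend, walkSign_append, walkSign_singleton]
    exact ⟨⟨hP j, h, trivial⟩, rfl⟩
  refine ⟨fun x => walkSign (P x), by simp [hPv_nil, walkSign], fun {s j i} h hi => ?_,
    fun {s j} h => ?_⟩
  · rw [← (extend h).2]
    exact hv.walkSign_eq_of_not_mem hpos hstrong hi (hP i) (hPend i) (hPv i) (extend h).1
      (by simp) (by simp [hPv j, Ne.symm hi])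
  · rw [← (extend h).2]
    exact hv.walkSign_eq_false hpos (by simp) (extend h).1 (by simp) (by simpa using hPv j)

theorem eq_of_reflTransGen_arcAvoiding {a b : V} (h : Relation.ReflTransGen (G.ArcAvoiding v) a b)
    (hb : b = v) : a = v := by
  rcases h.cases_tail with rfl | ⟨_, -, hcb⟩
  · exact hb
  · exact absurd hb hcb.2.1

theorem ne_of_reflTransGen_arcAvoiding {a b : V} (h : Relation.ReflTransGen (G.ArcAvoiding v) a b)
    (hb : b ≠ v) : a ≠ v := by
  rintro rfl
  rcases h.cases_head with rfl | ⟨_, hac, -⟩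
  · exact hb rfl
  · exact hac.1 rfl

theorem reflTransGen_arcAvoiding_of_mem {c p : V} {ch : List V} (hch : (c :: ch).IsChain G.Arc)
    (hnd : (c :: ch).Nodup) (hlast : (c :: ch).getLast (List.cons_ne_nil c ch) = v)
    (hp : p ∈ c :: ch) (hpv : p ≠ v) : Relation.ReflTransGen (G.ArcAvoiding v) c p := by
  induction ch generalizing c with
  | nil => simp_all
  | cons d t ih =>
    rcases List.mem_cons.1 hp with rfl | hp
    · exact .refl
    rw [List.isChain_cons_cons] at hch
    rw [List.getLast_cons_cons] at hlast
    have hdp := ih hch.2 hnd.of_cons hlast hp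
    have hcv : c ≠ v := fun hcv =>
      (List.nodup_cons.1 hnd).1 (hcv ▸ hlast ▸ List.getLast_mem _)
    exact .head ⟨hcv, ne_of_reflTransGen_arcAvoiding hdp hpv, hch.1⟩ hdp

namespace IsFeedbackVertex

theorem not_reflTransGen_of_arc (hv : G.IsFeedbackVertex v) {c k : V}
    (h : Relation.ReflTransGen (G.ArcAvoiding v) c k) (hk : k ≠ v) (hkc : G.Arc k c) : False :=
  hv.not_transGen_arcAvoiding c
    (.tail' h ⟨hk, ne_of_reflTransGen_arcAvoiding h hk, hkc⟩)

theorem exists_not_reflTransGen (hv : G.IsFeedbackVertex v) {P : V → Prop} {a b : V}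
    (hab : a ≠ b) (ha : P a) (hb : P b) :
    ∃ k₁ k₂, P k₁ ∧ P k₂ ∧ k₂ ≠ v ∧ ¬ Relation.ReflTransGen (G.ArcAvoiding v) k₂ k₁ := by
  by_cases hbv : b = v
  · exact ⟨b, a, hb, ha, hbv ▸ hab, fun h => (hbv ▸ hab) (eq_of_reflTransGen_arcAvoiding h hbv)⟩
  by_cases hba : Relation.ReflTransGen (G.ArcAvoiding v) b a
  · refine ⟨b, a, hb, ha, fun hav => hbv (eq_of_reflTransGen_arcAvoiding hba hav), fun hab' => ?_⟩
    rcases hab'.cases_head with rfl | ⟨c, hac, hcb⟩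
    · exact hab rfl
    · exact hv.not_transGen_arcAvoiding a (.head' hac (hcb.trans hba))
  · exact ⟨a, b, ha, hb, hbv, hba⟩

/-- Going backwards from `v` along sole in-arcs can only stop at a vertex with two in-neighbours:
closing up at `v` would make `G` a cycle, and closing up elsewhere would give a cycle of `G - v`. -/
theorem not_mem_of_soleArc (hv : G.IsFeedbackVertex v) (hstrong : G.StronglyConnected)
    (hsimple : G.IsSimple) (hnotcycle : ¬ G.IsCycleGraph) {c j : V} {ch : List V}
    (hnd : (c :: ch).Nodup) (hlast : (c :: ch).getLast (List.cons_ne_nil c ch) = v)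
    (hch : (c :: ch).IsChain G.SoleArc) (hj : G.SoleArc j c) : j ∉ c :: ch := by
  intro hjmem
  by_cases hjv : j = v
  · have hpred : ∀ i ∈ c :: ch, ∃ p ∈ c :: ch, G.SoleArc p i := fun i hi =>
      (List.mem_cons.1 hi).elim (fun hic => ⟨j, hjmem, hic ▸ hj⟩) hch.exists_rel_of_mem
    have hall : ∀ u, u ∈ c :: ch := fun u =>
      mem_of_reach_of_forall_arc_mem (S := {x | x ∈ c :: ch})
        (fun k i hi hki => let ⟨p, hp, hpi⟩ := hpred i hi; (hpi k).1 hki ▸ hp)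
        (hstrong u v) (hjv ▸ hjmem)
    have : Nonempty V := ⟨v⟩
    exact hnotcycle (isCycleGraph_of_forall_exists_soleArc hstrong hsimple fun i =>
      let ⟨p, _, hp⟩ := hpred i (hall i); ⟨p, hp⟩)
  · exact hv.not_reflTransGen_of_arc (reflTransGen_arcAvoiding_of_mem
      (hch.imp fun _ _ h => h.arc) hnd hlast hjmem hjv) hjv hj.arc

theorem exists_soleArc_chain [Fintype V] (hv : G.IsFeedbackVertex v)
    (hstrong : G.StronglyConnected) (hsimple : G.IsSimple) (hnotcycle : ¬ G.IsCycleGraph)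
    (hsrc : ∀ i, ∃ j, G.Arc j i) :
    ∃ c ch, (c :: ch).Nodup ∧ (c :: ch).getLast (List.cons_ne_nil c ch) = v ∧
      (c :: ch).IsChain G.SoleArc ∧ ∃ k₁ k₂, k₁ ≠ k₂ ∧ G.Arc k₁ c ∧ G.Arc k₂ c := by
  by_contra! H
  have long : ∀ m : ℕ, ∃ c ch, (c :: ch).Nodup ∧
      (c :: ch).getLast (List.cons_ne_nil c ch) = v ∧ (c :: ch).IsChain G.SoleArc ∧
      ch.length = m := by
    intro m
    induction m with
    | zero => exact ⟨v, [], by simp, rfl, by simp, rfl⟩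
    | succ m ih =>
      obtain ⟨c, ch, hnd, hlast, hch, hlen⟩ := ih
      obtain ⟨j, hj⟩ := hsrc c
      have hsole : G.SoleArc j c := fun k =>
        ⟨fun hk => by_contra fun hkj => H c ch hnd hlast hch k j hkj hk hj, fun h => h ▸ hj⟩
      refine ⟨j, c :: ch, ?_, by rwa [List.getLast_cons_cons], .cons_cons hsole hch, by simp [hlen]⟩
      exact List.nodup_cons.2
        ⟨hv.not_mem_of_soleArc hstrong hsimple hnotcycle hnd hlast hch hsole, hnd⟩
  obtain ⟨c, ch, hnd, -, -, hlen⟩ := long (Fintype.card V)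
  have := hnd.length_le_card
  simp [hlen] at this

theorem exists_topologicalOrder [Fintype V] (hv : G.IsFeedbackVertex v) :
    ∃ L : List V, L.Nodup ∧ (∀ j, j ∈ L ↔ j ≠ v) ∧ (L.Pairwise fun a b => ¬ G.Arc b a) ∧
      ∀ m ∈ L, ¬ G.Arc m m := by
  classical
  obtain ⟨L, hperm, hsorted⟩ :=
    hv.wellFounded_arcAvoiding.exists_perm_pairwise_not_rel (Finset.univ.erase v).toList
  have hL : ∀ j, j ∈ L ↔ j ≠ v := by simp [hperm.mem_iff]
  refine ⟨L, hperm.nodup_iff.2 (Finset.nodup_toList _), hL, ?_, fun m hm h => ?_⟩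
  · exact hsorted.imp_of_mem fun ha hb h hba => h ⟨(hL _).1 hb, (hL _).1 ha, hba⟩
  · exact hv.not_transGen_arcAvoiding m (.single ⟨(hL m).1 hm, (hL m).1 hm, h⟩)

theorem not_reflTransGen_of_mem_chain (hv : G.IsFeedbackVertex v) {c k p : V} {ch : List V}
    (hch : (c :: ch).IsChain G.Arc) (hnd : (c :: ch).Nodup)
    (hlast : (c :: ch).getLast (List.cons_ne_nil c ch) = v) (hkc : G.Arc k c)
    (hp : p ∈ c :: ch) (hpv : p ≠ v) : ¬ Relation.ReflTransGen (G.ArcAvoiding v) p k :=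
  fun hpk => hv.not_reflTransGen_of_arc
    ((reflTransGen_arcAvoiding_of_mem hch hnd hlast hp hpv).trans hpk)
    (fun hk => hpv (eq_of_reflTransGen_arcAvoiding hpk hk)) hkc

end IsFeedbackVertex

theorem NoPositiveCycle.not_pos_self (hpos : G.NoPositiveCycle) (i : V) : ¬ G.pos i i := fun h =>
  by simpa using hpos i [(i, true)] ⟨by simp, ⟨h, trivial⟩, rfl, by simp⟩

end SignedDigraph

section BooleanNetwork

open SignedDigraph

variable {V : Type*} [DecidableEq V] {G : SignedDigraph V} {f : (V → Bool) → V → Bool}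

@[simp]
theorem wordUpdate_nil (x : V → Bool) : wordUpdate f [] x = x := rfl

@[simp]
theorem wordUpdate_cons (i : V) (w : List V) (x : V → Bool) :
    wordUpdate f (i :: w) x = wordUpdate f w (localUpdate f i x) := rfl

theorem wordUpdate_append (w₁ w₂ : List V) (x : V → Bool) :
    wordUpdate f (w₁ ++ w₂) x = wordUpdate f w₂ (wordUpdate f w₁ x) := by
  simp [wordUpdate, List.foldl_append]

theorem syncWord_of_forall_eq {w : List V} (h : ∀ x y, wordUpdate f w x = wordUpdate f w y) :
    SyncWord f w :=
  ⟨wordUpdate f w fun _ => false, fun x => h x _⟩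

theorem wordUpdate_eq_of_pairwise {g : V → Bool} {L : List V}
    (hL : L.Pairwise fun a b => ¬ G.Arc b a) (hloop : ∀ m ∈ L, ¬ G.Arc m m)
    (hstep : ∀ m ∈ L, ∀ x, (∀ j, G.Arc j m → x j = g j) → f x m = g m)
    {x : V → Bool} (hx : ∀ j ∉ L, ∀ i ∈ L, G.Arc j i → x j = g j) :
    wordUpdate f L x = fun j => if j ∈ L then g j else x j := by
  induction L generalizing x with
  | nil => rfl
  | cons m L ih =>
    rw [List.pairwise_cons] at hL
    have hm : f x m = g m := hstep m (by simp) x fun j hj => hx j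
      (fun hjL => (List.mem_cons.1 hjL).elim (fun h => hloop m (by simp) (h ▸ hj))
        fun h => hL.1 j h hj) m (by simp) hj
    rw [wordUpdate_cons, ih hL.2 (fun m' hm' => hloop m' (by simp [hm']))
      (fun m' hm' => hstep m' (by simp [hm']))]
    · funext j
      by_cases hjm : j = m <;> by_cases hjL : j ∈ L <;>
        simp [localUpdate, hjm, hjL, hm]
    · intro j hjL i hi hji
      by_cases hjm : j = m
      · simp [localUpdate, hjm, hm]
      · simpa [localUpdate, hjm] using hx j (by simp [hjm, hjL]) i (by simp [hi]) hji

theorem apply_wordUpdate_getLast_eq_of_isChain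
    (hloc : ∀ i x y, (∀ j, G.Arc j i → x j = y j) → f x i = f y i)
    {a : V} {l : List V} (hl : (a :: l).IsChain G.SoleArc) {y₀ y₁ : V → Bool} (h : y₀ a = y₁ a) :
    wordUpdate f l y₀ ((a :: l).getLast (List.cons_ne_nil a l)) =
      wordUpdate f l y₁ ((a :: l).getLast (List.cons_ne_nil a l)) := by
  induction l generalizing a y₀ y₁ with
  | nil => exact h
  | cons b t ih =>
    rw [List.isChain_cons_cons] at hl
    rw [List.getLast_cons_cons, wordUpdate_cons, wordUpdate_cons]
    refine ih hl.2 ?_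
    simp only [localUpdate, Function.update_self]
    exact hloc b y₀ y₁ fun j hj => ((hl.1 j).1 hj) ▸ h

end BooleanNetwork

section AndOrNet

open SignedDigraph

variable {V : Type*} {G : SignedDigraph V} {f : (V → Bool) → V → Bool} {i : V}

theorem IsConjunction.apply_eq_true_iff (h : IsConjunction G f i) (x : V → Bool) :
    f x i = true ↔ ∀ s j, G.SignedArc s j i → (x j == s) = true := by
  simp [h x, SignedArc, Bool.forall_bool, and_comm]

theorem IsDisjunction.apply_eq_false_iff (h : IsDisjunction G f i) (x : V → Bool) :
    f x i = false ↔ ∀ s j, G.SignedArc s j i → (x j == s) = false := by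
  simp [h x, SignedArc, Bool.forall_bool, and_comm]

theorem andOr_apply_eq_apply (hfi : IsConjunction G f i ∨ IsDisjunction G f i) {x y : V → Bool}
    (hxy : ∀ j, G.Arc j i → x j = y j) : f x i = f y i := by
  have hlit : ∀ s j, G.SignedArc s j i → (x j == s) = (y j == s) := fun s j h => by
    rw [hxy j (SignedArc.arc h)]
  rcases hfi with hc | hd
  · rw [Bool.eq_iff_iff, hc.apply_eq_true_iff, hc.apply_eq_true_iff]
    exact forall₃_congr fun s j h => by rw [hlit s j h]
  · rw [← Bool.not_inj_iff, Bool.eq_iff_iff]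
    simp only [Bool.not_eq_true', hd.apply_eq_false_iff]
    exact forall₃_congr fun s j h => by rw [hlit s j h]

theorem andOr_apply_eq_of_forall_signedArc (hfi : IsConjunction G f i ∨ IsDisjunction G f i)
    {x : V → Bool} {t : Bool}
    (hin : ∃ s j, G.SignedArc s j i) (hx : ∀ s j, G.SignedArc s j i → (x j == s) = t) :
    f x i = t := by
  obtain ⟨s₀, j₀, h₀⟩ := hin
  rcases hfi with hc | hd <;> cases t
  · rw [← Bool.not_eq_true, hc.apply_eq_true_iff]
    exact fun h => by simpa [hx s₀ j₀ h₀] using h s₀ j₀ h₀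
  · exact (hc.apply_eq_true_iff x).2 hx
  · exact (hd.apply_eq_false_iff x).2 hx
  · rw [← Bool.not_eq_false, hd.apply_eq_false_iff]
    exact fun h => by simpa [hx s₀ j₀ h₀] using h s₀ j₀ h₀

theorem andOr_exists_apply_eq_of_beq_ne (hfi : IsConjunction G f i ∨ IsDisjunction G f i)
    {s₁ s₂ : Bool} {j₁ j₂ : V}
    (h₁ : G.SignedArc s₁ j₁ i) (h₂ : G.SignedArc s₂ j₂ i) :
    ∃ γ, ∀ x : V → Bool, (x j₁ == s₁) ≠ (x j₂ == s₂) → f x i = γ := by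
  rcases hfi with hc | hd
  · refine ⟨false, fun x hx => ?_⟩
    rw [← Bool.not_eq_true, hc.apply_eq_true_iff]
    exact fun h => hx ((h s₁ j₁ h₁).trans (h s₂ j₂ h₂).symm)
  · refine ⟨true, fun x hx => ?_⟩
    rw [← Bool.not_eq_false, hd.apply_eq_false_iff]
    exact fun h => hx ((h s₁ j₁ h₁).trans (h s₂ j₂ h₂).symm)

end AndOrNet

theorem Bool.beq_beq_assoc (a b c : Bool) : ((a == b) == c) = (a == (b == c)) := by
  decide +revert

section Switching

open SignedDigraph

variable {V : Type*} [DecidableEq V] {G : SignedDigraph V} {v : V} {σ : V → Bool}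
  {f : (V → Bool) → V → Bool}

def switched (σ : V → Bool) (b : Bool) : V → Bool := fun j => b == σ j

theorem switched_beq {s : Bool} {j i : V} (hσ : G.IsSwitchingAt v σ) (b : Bool)
    (h : G.SignedArc s j i) : (switched σ b j == s) = if i = v then !b else switched σ b i := by
  rw [switched, Bool.beq_beq_assoc]
  split_ifs with hi
  · rw [hσ.frustrated (hi ▸ h), beq_false]
  · rw [← hσ.consistent h hi, switched]

theorem apply_eq_switched (hσ : G.IsSwitchingAt v σ)
    (hf : ∀ i, IsConjunction G f i ∨ IsDisjunction G f i) {i : V} (hin : ∃ j, G.Arc j i)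
    {x : V → Bool} {b : Bool} (hx : ∀ j, G.Arc j i → x j = switched σ b j) :
    f x i = if i = v then !b else switched σ b i := by
  obtain ⟨j₀, s₀, h₀⟩ := hin.imp fun _ => arc_iff_exists_signedArc.1
  refine andOr_apply_eq_of_forall_signedArc (hf i) ⟨s₀, j₀, h₀⟩ fun s j h => ?_
  rw [hx j h.arc, switched_beq hσ b h]

theorem exists_apply_eq_of_switched (hσ : G.IsSwitchingAt v σ)
    (hf : ∀ i, IsConjunction G f i ∨ IsDisjunction G f i) {s₁ s₂ : Bool} {k₁ k₂ c : V}
    (h₁ : G.SignedArc s₁ k₁ c) (h₂ : G.SignedArc s₂ k₂ c) :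
    ∃ γ, ∀ (b : Bool) (x : V → Bool), x k₁ = switched σ (!b) k₁ → x k₂ = switched σ b k₂ →
      f x c = γ := by
  obtain ⟨γ, hγ⟩ := andOr_exists_apply_eq_of_beq_ne (hf c) h₁ h₂
  refine ⟨γ, fun b x hx₁ hx₂ => hγ x ?_⟩
  rw [hx₁, hx₂, switched_beq hσ _ h₁, switched_beq hσ _ h₂]
  split_ifs <;> cases b <;> simp [switched]

theorem wordUpdate_eq_switched (hσ : G.IsSwitchingAt v σ)
    (hf : ∀ i, IsConjunction G f i ∨ IsDisjunction G f i) (hsrc : ∀ i, ∃ j, G.Arc j i)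
    {L : List V} (hL : L.Pairwise fun a b => ¬ G.Arc b a) (hloop : ∀ m ∈ L, ¬ G.Arc m m)
    (hvL : v ∉ L) {x : V → Bool} {b : Bool}
    (hx : ∀ j ∉ L, ∀ i ∈ L, G.Arc j i → x j = switched σ b j) :
    wordUpdate f L x = fun j => if j ∈ L then switched σ b j else x j :=
  wordUpdate_eq_of_pairwise hL hloop (fun m hm x hx => by
    rw [apply_eq_switched hσ hf (hsrc m) hx, if_neg (ne_of_mem_of_not_mem hm hvL)]) hx

theorem wordUpdate_eq_switched_apply_self (hσ : G.IsSwitchingAt v σ)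
    (hf : ∀ i, IsConjunction G f i ∨ IsDisjunction G f i) (hsrc : ∀ i, ∃ j, G.Arc j i)
    {L : List V} (hL : ∀ j, j ∈ L ↔ j ≠ v) (hsorted : L.Pairwise fun a b => ¬ G.Arc b a)
    (hloop : ∀ m ∈ L, ¬ G.Arc m m) (x : V → Bool) : wordUpdate f L x = switched σ (x v) := by
  have hvL : v ∉ L := fun h => (hL v).1 h rfl
  have hxv : x v = switched σ (x v) v := by simp [switched, hσ.apply_self]
  rw [wordUpdate_eq_switched (b := x v) hσ hf hsrc hsorted hloop hvL
    fun j hj _ _ _ => by rwa [not_not.1 (mt (hL j).2 hj)]]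
  funext j
  by_cases hjv : j = v
  · simp [hjv, hvL, ← hxv]
  · simp [(hL j).2 hjv]

/-- Updating `v` flips its state; re-aligning `L₁`, which is entered from outside only through
`v`, then makes `k₁` and `k₂` disagree through `σ`, and this fixes the update of `c`. -/
theorem exists_forall_wordUpdate_switched_apply_eq (hσ : G.IsSwitchingAt v σ)
    (hf : ∀ i, IsConjunction G f i ∨ IsDisjunction G f i) (hsrc : ∀ i, ∃ j, G.Arc j i)
    {L₁ : List V} (hsorted : L₁.Pairwise fun a b => ¬ G.Arc b a)
    (hloop : ∀ m ∈ L₁, ¬ G.Arc m m) (hvL : v ∉ L₁)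
    (hclosed : ∀ j i, i ∈ L₁ → G.Arc j i → j = v ∨ j ∈ L₁) {c k₁ k₂ : V}
    (hk₁ : k₁ = v ∨ k₁ ∈ L₁) (hk₂ : k₂ ≠ v) (hk₂L : k₂ ∉ L₁) (h₁ : G.Arc k₁ c)
    (h₂ : G.Arc k₂ c) :
    ∃ γ, ∀ b, wordUpdate f (v :: L₁ ++ [c]) (switched σ b) c = γ := by
  obtain ⟨s₁, h₁⟩ := arc_iff_exists_signedArc.1 h₁
  obtain ⟨s₂, h₂⟩ := arc_iff_exists_signedArc.1 h₂
  obtain ⟨γ, hγ⟩ := exists_apply_eq_of_switched (f := f) hσ hf h₁ h₂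
  refine ⟨γ, fun b => ?_⟩
  set y := localUpdate f v (switched σ b)
  have hyv : y v = switched σ (!b) v := by
    simp [y, localUpdate, apply_eq_switched hσ hf (hsrc v) (fun _ _ => rfl), switched,
      hσ.apply_self]
  have hy : ∀ j ≠ v, y j = switched σ b j := fun j hj => by simp [y, localUpdate, hj]
  have hsweep := wordUpdate_eq_switched (x := y) (b := !b) hσ hf hsrc hsorted hloop hvL
    fun j hj i hi hji => (hclosed j i hi hji).elim (fun h => h ▸ hyv) (absurd · hj)
  rw [List.cons_append, wordUpdate_cons, wordUpdate_append, hsweep, wordUpdate_cons,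
    wordUpdate_nil, localUpdate, Function.update_self]
  refine hγ b _ ?_ ?_
  · rcases hk₁ with rfl | hk₁ <;> simp [*]
  · simp [hk₂L, hy k₂ hk₂]

theorem syncWord_of_isSwitchingAt (hσ : G.IsSwitchingAt v σ)
    (hf : ∀ i, IsConjunction G f i ∨ IsDisjunction G f i) (hsrc : ∀ i, ∃ j, G.Arc j i)
    {L₀ L₁ ch : List V} {c k₁ k₂ : V} (hL₀ : ∀ j, j ∈ L₀ ↔ j ≠ v)
    (hsorted : L₀.Pairwise fun a b => ¬ G.Arc b a) (hloop : ∀ m ∈ L₀, ¬ G.Arc m m)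
    (hL₁ : L₁.Sublist L₀) (hclosed : ∀ j i, i ∈ L₁ → G.Arc j i → j = v ∨ j ∈ L₁)
    (hk₁ : k₁ = v ∨ k₁ ∈ L₁) (hk₂ : k₂ ≠ v) (hk₂L : k₂ ∉ L₁) (h₁ : G.Arc k₁ c)
    (h₂ : G.Arc k₂ c) (hch : (c :: ch).IsChain G.SoleArc)
    (hlast : (c :: ch).getLast (List.cons_ne_nil c ch) = v) :
    SyncWord f (L₀ ++ (v :: L₁ ++ [c]) ++ ch ++ L₀) := by
  have hvL₁ : v ∉ L₁ := fun h => (hL₀ v).1 (hL₁.subset h) rfl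
  obtain ⟨γ, hγ⟩ := exists_forall_wordUpdate_switched_apply_eq hσ hf hsrc (hsorted.sublist hL₁)
    (fun m hm => hloop m (hL₁.subset hm)) hvL₁ hclosed hk₁ hk₂ hk₂L h₁ h₂
  have hchain (b : Bool) : wordUpdate f ch (wordUpdate f (v :: L₁ ++ [c]) (switched σ b)) v =
      wordUpdate f ch (wordUpdate f (v :: L₁ ++ [c]) (switched σ false)) v := by
    have := apply_wordUpdate_getLast_eq_of_isChain (fun i _ _ => andOr_apply_eq_apply (hf i))
      hch ((hγ b).trans (hγ false).symm)
    rwa [hlast] at this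
  refine syncWord_of_forall_eq fun x y => ?_
  rw [wordUpdate_append _ L₀, wordUpdate_append _ ch, wordUpdate_append L₀,
    wordUpdate_append _ L₀, wordUpdate_append _ ch, wordUpdate_append L₀]
  simp only [wordUpdate_eq_switched_apply_self hσ hf hsrc hL₀ hsorted hloop, hchain]

end Switching

namespace SignedDigraph

variable {V : Type*} [Fintype V] [DecidableEq V] {G : SignedDigraph V} {v : V}

theorem exists_syncWord_of_card_le_one (hpos : G.NoPositiveCycle) (hnotcycle : ¬ G.IsCycleGraph)
    (hcard : Fintype.card V ≤ 1) :
    ∃ w : List V, w.length ≤ 3 * Fintype.card V - 1 ∧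
      ∀ f : (V → Bool) → V → Bool, IsAndOrNet G f → SyncWord f w := by
  rcases isEmpty_or_nonempty V with hV | hV
  · exact ⟨[], by simp, fun f _ => syncWord_of_forall_eq fun x y => funext isEmptyElim⟩
  obtain ⟨u⟩ := id hV
  have : Subsingleton V := Fintype.card_le_one_iff_subsingleton.1 hcard
  have hcard_pos : 0 < Fintype.card V := Fintype.card_pos
  have hno : ∀ j, ¬ G.Arc j u := by
    rintro j (hp | hn)
    · exact hpos.not_pos_self j (Subsingleton.elim u j ▸ hp)
    · refine hnotcycle (isCycleGraph_of_forall_exists_soleArc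
        (fun _ _ => ⟨[], trivial, Subsingleton.elim _ _⟩)
        (fun a b hab => hpos.not_pos_self a (Subsingleton.elim b a ▸ hab.1))
        fun i => ⟨j, fun k => ⟨fun _ => Subsingleton.elim _ _, fun hk => ?_⟩⟩)
      rw [hk, Subsingleton.elim i u]
      exact Or.inr hn
  refine ⟨[u], by simp; omega, fun f hf => syncWord_of_forall_eq fun x y => funext fun j => ?_⟩
  rw [Subsingleton.elim j u]
  simpa [localUpdate] using andOr_apply_eq_apply (hf.2 u) fun j hj => absurd hj (hno j)

theorem IsFeedbackVertex.exists_syncWord (hv : G.IsFeedbackVertex v)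
    (hstrong : G.StronglyConnected) (hpos : G.NoPositiveCycle) (hnotcycle : ¬ G.IsCycleGraph)
    (hcard : 1 < Fintype.card V) :
    ∃ w : List V, w.length ≤ 3 * Fintype.card V - 1 ∧
      ∀ f : (V → Bool) → V → Bool, IsAndOrNet G f → SyncWord f w := by
  classical
  have : Nontrivial V := Fintype.one_lt_card_iff_nontrivial.1 hcard
  have hsrc := exists_arc_of_stronglyConnected hstrong
  obtain ⟨σ, hσ⟩ := hv.exists_isSwitchingAt hpos hstrong
  obtain ⟨c, ch, hnd, hlast, hch, ka, kb, hab, hka, hkb⟩ :=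
    hv.exists_soleArc_chain hstrong hσ.isSimple hnotcycle hsrc
  obtain ⟨k₁, k₂, hk₁, hk₂, hk₂v, hk₂k₁⟩ :=
    hv.exists_not_reflTransGen (P := (G.Arc · c)) hab hka hkb
  obtain ⟨L₀, hnd₀, hL₀, hsorted, hloop⟩ := hv.exists_topologicalOrder
  set L₁ := L₀.filter fun j => Relation.ReflTransGen (G.ArcAvoiding v) j k₁
  have hL₁ : ∀ j, j ∈ L₁ ↔ j ≠ v ∧ Relation.ReflTransGen (G.ArcAvoiding v) j k₁ := by
    simp [L₁, hL₀]
  have hdisj : (L₁ ++ c :: ch).Nodup := by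
    refine List.nodup_append.2 ⟨hnd₀.filter _, hnd, ?_⟩
    rintro p hp _ hq rfl
    obtain ⟨hpv, hpk⟩ := (hL₁ p).1 hp
    exact hv.not_reflTransGen_of_mem_chain (hch.imp fun _ _ h => h.arc) hnd hlast hk₁ hq hpv hpk
  refine ⟨L₀ ++ (v :: L₁ ++ [c]) ++ ch ++ L₀, ?_, fun f hf => syncWord_of_isSwitchingAt hσ hf.2
    hsrc hL₀ hsorted hloop List.filter_sublist ?_ ?_ hk₂v ?_ hk₁ hk₂ hch hlast⟩
  · have hlen : L₀.length = Fintype.card V - 1 := by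
      rw [← List.toFinset_card_of_nodup hnd₀, show L₀.toFinset = Finset.univ.erase v by
        ext; simp [hL₀], Finset.card_erase_of_mem (Finset.mem_univ v), Finset.card_univ]
    have := hdisj.length_le_card
    simp only [List.length_append, List.length_cons, List.length_nil] at this ⊢
    omega
  · intro j i hi hji
    obtain ⟨hiv, hik⟩ := (hL₁ i).1 hi
    by_cases hjv : j = v
    · exact Or.inl hjv
    · exact Or.inr ((hL₁ j).2 ⟨hjv, .head ⟨hjv, hiv, hji⟩ hik⟩)
  · by_cases hk₁v : k₁ = v
    · exact Or.inl hk₁v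
    · exact Or.inr ((hL₁ k₁).2 ⟨hk₁v, .refl⟩)
  · exact fun h => hk₂k₁ ((hL₁ k₂).1 h).2

end SignedDigraph

/-- Proposition 3 of the paper. Let `G` be a strongly connected
signed digraph on `n` vertices, without positive cycles, whose underlying digraph is
not a cycle. If some set of at most one vertex meets every cycle of `G`, then there is
a single word `w` of length at most `3n − 1` which synchronizes every and-or-net
on `G`. -/
theorem statement17 {V : Type} [Fintype V] [DecidableEq V]
    (G : SignedDigraph V) (n : ℕ) (hn : Fintype.card V = n)
    (hstrong : G.StronglyConnected) (hpos : G.NoPositiveCycle)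
    (hnotcycle : ¬ G.IsCycleGraph)
    (hfvs : ∃ S : Finset V, S.card ≤ 1 ∧
      ∀ u steps, G.IsCycle u steps → ∃ v ∈ S, v ∈ u :: steps.map Prod.fst) :
    ∃ w : List V, w.length ≤ 3 * n - 1 ∧
      ∀ f : (V → Bool) → V → Bool, IsAndOrNet G f → SyncWord f w := by
  subst hn
  rcases le_or_gt (Fintype.card V) 1 with hcard | hcard
  · exact SignedDigraph.exists_syncWord_of_card_le_one hpos hnotcycle hcard
  · have : Nonempty V := Fintype.card_pos_iff.1 (by omega)
    obtain ⟨v, hv⟩ := SignedDigraph.exists_isFeedbackVertex hfvs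
    exact hv.exists_syncWord hstrong hpos hnotcycle hcard
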